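/- Let T be a finite tree on a vertex set with at least two vertices, and let M be a marking relation on ordered pairs of adjacent vertices (M a b is read: the edge {a,b} is marked at its a-end). Assume: (i) for every leaf a (vertex of degree 1) with unique neighbor b, the edge {a,b} is marked at its a-end (M a b holds); and (ii) for every vertex b of degree at least 2, there are at least two distinct neighbors c of b such that M b c holds. Then there exists a pendant edge marked at both ends, i.e., there exist adjacent vertices a, b with a a leaf such that both M a b and M b a hold. -/
import Mathlib


/-- In a finite tree with at least two vertices, given a marking
relation `M` on ordered pairs of adjacent vertices such that (i) every pendant edge is
marked at its leaf end, and (ii) every vertex of degree at least 2 has at least two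
distinct neighbors at which the corresponding edges are marked at that vertex's end,
there exists a pendant edge marked at both ends. -/
theorem tree_exists_pendant_edge_marked_at_both_ends
    {V : Type*} [Fintype V] [DecidableEq V]
    (G : SimpleGraph V) [DecidableRel G.Adj]
    (hT : G.IsTree) (hcard : 2 ≤ Fintype.card V)
    (M : V → V → Prop)
    (hleaf : ∀ a b : V, G.degree a = 1 → G.Adj a b → M a b)
    (hbig : ∀ b : V, 2 ≤ G.degree b →
      ∃ c₁ c₂ : V, c₁ ≠ c₂ ∧ G.Adj b c₁ ∧ G.Adj b c₂ ∧ M b c₁ ∧ M b c₂) :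
    ∃ a b : V, G.Adj a b ∧ G.degree a = 1 ∧ M a b ∧ M b a := by
  classical
  by_contra hcon
  push_neg at hcon
  -- every vertex has positive degree
  have hdegpos : ∀ v : V, 0 < G.degree v := by
    intro v
    rw [SimpleGraph.degree_pos_iff_exists_adj]
    obtain ⟨w, hw⟩ := Fintype.exists_ne_of_one_lt_card (by omega) v
    obtain ⟨p⟩ := hT.isConnected.preconnected v w
    cases p with
    | nil => exact absurd rfl hw
    | cons h _ => exact ⟨_, h⟩
  set n := Fintype.card V with hn
  set P : Finset (V × V) := Finset.univ.filter (fun p => G.Adj p.1 p.2) with hPdef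
  set S : Finset (V × V) := P.filter (fun p => M p.1 p.2) with hSdef
  set T : Finset (V × V) := P.filter (fun p => ¬ M p.1 p.2) with hTdef
  have hST : S.card + T.card = P.card := Finset.card_filter_add_card_filter_not _
  -- P.card = 2 * (n - 1)
  have hPcard : P.card = 2 * (n - 1) := by
    have hfib : P.card = ∑ v : V, (P.filter (fun p => p.1 = v)).card :=
      Finset.card_eq_sum_card_fiberwise (fun p _ => Finset.mem_univ p.1)
    have hfib2 : ∀ v : V, (P.filter (fun p => p.1 = v)).card = G.degree v := by
      intro v
      rw [← SimpleGraph.card_neighborFinset_eq_degree]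
      apply Finset.card_bij (fun p _ => p.2)
      · intro p hp
        simp only [hPdef, Finset.mem_filter, Finset.mem_univ, true_and] at hp
        simp [SimpleGraph.mem_neighborFinset, ← hp.2, hp.1]
      · intro p hp q hq hpq
        simp only [hPdef, Finset.mem_filter, Finset.mem_univ, true_and] at hp hq
        exact Prod.ext (hp.2.trans hq.2.symm) hpq
      · intro b hb
        simp only [SimpleGraph.mem_neighborFinset] at hb
        exact ⟨(v, b), by simp [hPdef, hb], rfl⟩
    rw [hfib]
    simp_rw [hfib2]
    rw [G.sum_degrees_eq_twice_card_edges]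
    have := hT.card_edgeFinset
    omega
  -- lower bound for S
  have hS : ∑ v : V, (if G.degree v = 1 then 1 else 2) ≤ S.card := by
    have hfib : S.card = ∑ v : V, (S.filter (fun p => p.1 = v)).card :=
      Finset.card_eq_sum_card_fiberwise (fun p _ => Finset.mem_univ p.1)
    rw [hfib]
    apply Finset.sum_le_sum
    intro v _
    by_cases hdeg : G.degree v = 1
    · simp only [hdeg, if_pos]
      have : 0 < G.degree v := hdegpos v
      rw [SimpleGraph.degree_pos_iff_exists_adj] at this
      obtain ⟨b, hb⟩ := this
      have : (v, b) ∈ S.filter (fun p => p.1 = v) := by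
        simp [hSdef, hPdef, hb, hleaf v b hdeg hb]
      exact Finset.card_pos.mpr ⟨_, this⟩
    · have h2 : 2 ≤ G.degree v := by have := hdegpos v; omega
      obtain ⟨c₁, c₂, hne, ha1, ha2, hm1, hm2⟩ := hbig v h2
      have hsub : ({(v, c₁), (v, c₂)} : Finset (V × V)) ⊆ S.filter (fun p => p.1 = v) := by
        intro p hp
        simp only [Finset.mem_insert, Finset.mem_singleton] at hp
        rcases hp with rfl | rfl
        · simp [hSdef, hPdef, ha1, hm1]
        · simp [hSdef, hPdef, ha2, hm2]
      have hc : ({(v, c₁), (v, c₂)} : Finset (V × V)).card = 2 := by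
        rw [Finset.card_insert_of_notMem (by simp [hne]), Finset.card_singleton]
      rw [if_neg hdeg]
      calc 2 = ({(v, c₁), (v, c₂)} : Finset (V × V)).card := hc.symm
        _ ≤ _ := Finset.card_le_card hsub
  -- lower bound for T
  have hTb : ∑ v : V, (if G.degree v = 1 then 1 else 0) ≤ T.card := by
    have hfib : T.card = ∑ v : V, (T.filter (fun p => p.2 = v)).card :=
      Finset.card_eq_sum_card_fiberwise (fun p _ => Finset.mem_univ p.2)
    rw [hfib]
    apply Finset.sum_le_sum
    intro v _
    by_cases hdeg : G.degree v = 1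
    · simp only [hdeg, if_pos]
      have : 0 < G.degree v := hdegpos v
      rw [SimpleGraph.degree_pos_iff_exists_adj] at this
      obtain ⟨b, hb⟩ := this
      have hMa : M v b := hleaf v b hdeg hb
      have hnM : ¬ M b v := hcon v b hb hdeg hMa
      have : (b, v) ∈ T.filter (fun p => p.2 = v) := by
        simp [hTdef, hPdef, hb.symm, hnM]
      exact Finset.card_pos.mpr ⟨_, this⟩
    · simp [hdeg]
  -- combine
  have hsum : ∑ v : V, (if G.degree v = 1 then 1 else 2)
      + ∑ v : V, (if G.degree v = 1 then 1 else 0) = 2 * n := by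
    rw [← Finset.sum_add_distrib]
    have : ∀ v : V, (if G.degree v = 1 then 1 else 2) + (if G.degree v = 1 then 1 else 0)
        = 2 := by
      intro v; by_cases h : G.degree v = 1 <;> simp [h]
    simp_rw [this]
    simp [hn, Finset.card_univ, mul_comm]
  omega
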